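/- Let f, g : ℝⁿ → ℝ be C² functions, let x* be a local minimum of f subject to the constraint g = 0 with ∇g(x*) ≠ 0, and suppose ∇f(x*) = λ* ∇g(x*) with λ* ≠ 0. Let γ : (−ε, ε) → ℝⁿ be a C² curve with γ(0) = x* and g(γ(t)) = 0 for all t ∈ (−ε, ε). Then −γ'(0)ᵀ ∇²f(x*) γ'(0) / ‖∇f(x*)‖ ≤ −(λ*/|λ*|) · γ'(0)ᵀ ∇²g(x*) γ'(0) / ‖∇g(x*)‖. -/

import Mathlib

open Matrix Set Metric

noncomputable def grad {n : ℕ} (f : (Fin n → ℝ) → ℝ) (x : Fin n → ℝ) : Fin n → ℝ :=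
  fun i => fderiv ℝ f x (Pi.single i 1)

noncomputable def hess {n : ℕ} (f : (Fin n → ℝ) → ℝ) (x : Fin n → ℝ) :
    Matrix (Fin n) (Fin n) ℝ :=
  Matrix.of fun i j => fderiv ℝ (fun y => fderiv ℝ f y (Pi.single j 1)) x (Pi.single i 1)

noncomputable def jac {n m : ℕ} (g : (Fin n → ℝ) → Fin m → ℝ) (x : Fin n → ℝ) :
    Matrix (Fin m) (Fin n) ℝ :=
  Matrix.of fun i j => fderiv ℝ (fun y => g y i) x (Pi.single j 1)

noncomputable def euclNorm {n : ℕ} (v : Fin n → ℝ) : ℝ := Real.sqrt (v ⬝ᵥ v)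

/-! The Lagrangian `L = f - λ g` has a critical point at `x*`, and along the constraint curve it
agrees with `f`, so `t ↦ L (γ t)` has a local minimum at `0`. Its second derivative there is
`D²L(x*)(v, v)` with `v = γ'(0)` (the `γ''(0)` term is killed by `DL(x*) = 0`), hence
`vᵀ ∇²f v ≥ λ vᵀ ∇²g v`. Since `‖∇f‖ = |λ| ‖∇g‖`, dividing by `‖∇f‖` gives the claim. -/

open Filter Topology

-- Continuity matters: `-x²` with its value at `0` lowered has a local minimum at `0`.
theorem IsLocalMin.deriv_deriv_nonneg {φ : ℝ → ℝ} {a : ℝ} (hmin : IsLocalMin φ a)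
    (hc : ContinuousAt φ a) : 0 ≤ deriv (deriv φ) a := by
  by_contra! hneg
  have hmax : IsLocalMax φ a := isLocalMax_of_deriv_deriv_neg hneg hmin.deriv_eq_zero hc
  have hconst : φ =ᶠ[𝓝 a] fun _ => φ a :=
    (hmin.and hmax).mono fun _ h => le_antisymm h.2 h.1
  have hderiv : deriv φ =ᶠ[𝓝 a] fun _ => 0 :=
    hconst.eventuallyEq_nhds.mono fun _ h => h.deriv_eq.trans (deriv_const _ _)
  simp [hderiv.deriv_eq] at hneg

section SecondDerivative

variable {𝕜 E G : Type*} [NontriviallyNormedField 𝕜] [NormedAddCommGroup E] [NormedSpace 𝕜 E]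
  [NormedAddCommGroup G] [NormedSpace 𝕜 G]

theorem ContDiff.differentiable_fderiv {f : E → G} {n : WithTop ℕ∞} (hf : ContDiff 𝕜 n f)
    (hn : 2 ≤ n) : Differentiable 𝕜 (fderiv 𝕜 f) :=
  (hf.fderiv_right (m := 1) hn).differentiable one_ne_zero

theorem hasDerivAt_fderiv_apply_deriv {F : E → G} {γ : 𝕜 → E} {a : 𝕜} {w : E}
    (hF : DifferentiableAt 𝕜 (fderiv 𝕜 F) (γ a)) (hγ : DifferentiableAt 𝕜 γ a)
    (hγ' : HasDerivAt (deriv γ) w a) :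
    HasDerivAt (fun t => fderiv 𝕜 F (γ t) (deriv γ t))
      (fderiv 𝕜 (fderiv 𝕜 F) (γ a) (deriv γ a) (deriv γ a) + fderiv 𝕜 F (γ a) w) a :=
  (hF.hasFDerivAt.comp_hasDerivAt a hγ.hasDerivAt).clm_apply hγ'

theorem fderiv_fderiv_sub_smul {f g : E → G} {x : E} (hf : Differentiable 𝕜 f)
    (hg : Differentiable 𝕜 g) (hf' : DifferentiableAt 𝕜 (fderiv 𝕜 f) x)
    (hg' : DifferentiableAt 𝕜 (fderiv 𝕜 g) x) (c : 𝕜) :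
    fderiv 𝕜 (fderiv 𝕜 (f - c • g)) x =
      fderiv 𝕜 (fderiv 𝕜 f) x - c • fderiv 𝕜 (fderiv 𝕜 g) x := by
  have hfirst : fderiv 𝕜 (f - c • g) = fderiv 𝕜 f - c • fderiv 𝕜 g := by
    ext1 y
    rw [fderiv_sub (hf y) ((hg y).const_smul c), fderiv_const_smul (hg y)]
    rfl
  rw [hfirst, fderiv_sub hf' (hg'.const_smul c), fderiv_const_smul hg']

end SecondDerivative

theorem IsLocalMin.fderiv_fderiv_deriv_nonneg {E : Type*} [NormedAddCommGroup E]
    [NormedSpace ℝ E] {F : E → ℝ} {γ : ℝ → E} {a : ℝ} (hmin : IsLocalMin (F ∘ γ) a)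
    (hF : Differentiable ℝ F) (hF' : DifferentiableAt ℝ (fderiv ℝ F) (γ a))
    (hcrit : fderiv ℝ F (γ a) = 0) (hγ : ∀ᶠ t in 𝓝 a, DifferentiableAt ℝ γ t)
    (hγ' : DifferentiableAt ℝ (deriv γ) a) :
    0 ≤ fderiv ℝ (fderiv ℝ F) (γ a) (deriv γ a) (deriv γ a) := by
  have hderiv : deriv (F ∘ γ) =ᶠ[𝓝 a] fun t => fderiv ℝ F (γ t) (deriv γ t) :=
    hγ.mono fun t ht => fderiv_comp_deriv t (hF _) ht
  have hsecond := (hasDerivAt_fderiv_apply_deriv hF' hγ.self_of_nhds hγ'.hasDerivAt).deriv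
  have := hmin.deriv_deriv_nonneg (hF.continuous.continuousAt.comp hγ.self_of_nhds.continuousAt)
  rwa [hderiv.deriv_eq, hsecond, hcrit, _root_.zero_apply, add_zero] at this

theorem isLocalMin_sub_smul_comp_of_constrained {E : Type*} [TopologicalSpace E] {f g : E → ℝ}
    {γ : ℝ → E} {a : ℝ} (hmin : ∃ U ∈ 𝓝 (γ a), ∀ y ∈ U, g y = 0 → f (γ a) ≤ f y)
    (hγ : ContinuousAt γ a) (hγg : ∀ᶠ t in 𝓝 a, g (γ t) = 0) (c : ℝ) :
    IsLocalMin ((f - c • g) ∘ γ) a := by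
  obtain ⟨U, hU, hfU⟩ := hmin
  filter_upwards [hγ.preimage_mem_nhds hU, hγg] with t htU hgt
  simp only [Function.comp_apply, Pi.sub_apply, Pi.smul_apply, smul_eq_mul, hgt,
    hγg.self_of_nhds, mul_zero, sub_zero]
  exact hfU _ htU hgt

theorem dotProduct_hess_mulVec {n : ℕ} {F : (Fin n → ℝ) → ℝ} {x : Fin n → ℝ}
    (hF : DifferentiableAt ℝ (fderiv ℝ F) x) (u v : Fin n → ℝ) :
    u ⬝ᵥ (hess F x *ᵥ v) = fderiv ℝ (fderiv ℝ F) x u v := by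
  have hmatrix : hess F x = LinearMap.toMatrix₂' ℝ (fderiv ℝ (fderiv ℝ F) x).toLinearMap₁₂ := by
    ext i j
    rw [hess, Matrix.of_apply, fderiv_clm_apply hF (differentiableAt_const _)]
    simp
  rw [hmatrix, ← Matrix.toLinearMap₂'_apply', Matrix.toLinearMap₂'_toMatrix']
  rfl

theorem fderiv_sub_smul_eq_zero_of_grad_eq_smul {n : ℕ} {f g : (Fin n → ℝ) → ℝ}
    {x : Fin n → ℝ} {c : ℝ} (hf : DifferentiableAt ℝ f x) (hg : DifferentiableAt ℝ g x)
    (h : grad f x = c • grad g x) : fderiv ℝ (f - c • g) x = 0 := by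
  rw [fderiv_sub hf (hg.const_smul c), fderiv_const_smul hg, sub_eq_zero]
  exact ContinuousLinearMap.coe_injective <| (Pi.basisFun ℝ (Fin n)).ext fun i => by
    simpa [grad] using congrFun h i

theorem euclNorm_nonneg {n : ℕ} (v : Fin n → ℝ) : 0 ≤ euclNorm v := Real.sqrt_nonneg _

theorem euclNorm_smul {n : ℕ} (c : ℝ) (v : Fin n → ℝ) :
    euclNorm (c • v) = |c| * euclNorm v := by
  rw [euclNorm, euclNorm, smul_dotProduct, dotProduct_smul, smul_eq_mul, smul_eq_mul,
    ← mul_assoc, ← abs_mul_abs_self, Real.sqrt_mul (mul_self_nonneg _),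
    Real.sqrt_mul_self (abs_nonneg c)]

theorem stmt_10_general {n : ℕ} (f g : (Fin n → ℝ) → ℝ)
    (hf : ContDiff ℝ 2 f) (hg : ContDiff ℝ 2 g)
    (xs : Fin n → ℝ)
    (hmin : ∃ U ∈ nhds xs, ∀ y ∈ U, g y = 0 → f xs ≤ f y)
    (lam : ℝ) (hlam : grad f xs = lam • grad g xs)
    (ε : ℝ) (hε : 0 < ε)
    (γ : ℝ → Fin n → ℝ) (hγ : ContDiffOn ℝ 2 γ (Ioo (-ε) ε))
    (hγ0 : γ 0 = xs)
    (hγg : ∀ t ∈ Ioo (-ε) ε, g (γ t) = 0) :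
    -(deriv γ 0 ⬝ᵥ (hess f xs *ᵥ deriv γ 0)) / euclNorm (grad f xs) ≤
      -((lam / |lam|) *
        ((deriv γ 0 ⬝ᵥ (hess g xs *ᵥ deriv γ 0)) / euclNorm (grad g xs))) := by
  subst hγ0
  have hI : Ioo (-ε) ε ∈ 𝓝 (0 : ℝ) := Ioo_mem_nhds (neg_neg_iff_pos.mpr hε) hε
  have hγd : ∀ᶠ t in 𝓝 0, DifferentiableAt ℝ γ t :=
    eventually_mem_nhds_iff.mpr hI |>.mono fun t ht =>
      (hγ.differentiableOn two_ne_zero).differentiableAt ht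
  have hγ' : DifferentiableAt ℝ (deriv γ) 0 :=
    ((hγ.deriv_of_isOpen isOpen_Ioo one_add_one_eq_two.le).differentiableOn
      one_ne_zero).differentiableAt hI
  have hf1 := hf.differentiable two_ne_zero
  have hg1 := hg.differentiable two_ne_zero
  have hf2 := hf.differentiable_fderiv le_rfl
  have hg2 := hg.differentiable_fderiv le_rfl
  have hlagrange := (isLocalMin_sub_smul_comp_of_constrained hmin hγd.self_of_nhds.continuousAt
    (eventually_of_mem hI hγg) lam).fderiv_fderiv_deriv_nonneg (hf1.sub (hg1.const_smul lam))
      ((hf.sub (hg.const_smul lam)).differentiable_fderiv le_rfl _)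
      (fderiv_sub_smul_eq_zero_of_grad_eq_smul (hf1 _) (hg1 _) hlam) hγd hγ'
  rw [fderiv_fderiv_sub_smul hf1 hg1 (hf2 _) (hg2 _), _root_.sub_apply, _root_.sub_apply,
    _root_.smul_apply, _root_.smul_apply, smul_eq_mul, ← dotProduct_hess_mulVec (hf2 _),
    ← dotProduct_hess_mulVec (hg2 _)] at hlagrange
  rw [hlam, euclNorm_smul, div_mul_div_comm, ← neg_div]
  exact div_le_div_of_nonneg_right (by linarith)
    (mul_nonneg (abs_nonneg lam) (euclNorm_nonneg _))

/-- curvature-type inequality along any C² curve in the constraint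
set through a constrained local minimum (case m = 1). -/
theorem stmt_10 {n : ℕ} (f g : (Fin n → ℝ) → ℝ)
    (hf : ContDiff ℝ 2 f) (hg : ContDiff ℝ 2 g)
    (xs : Fin n → ℝ) (hgxs : g xs = 0)
    (hmin : ∃ U ∈ nhds xs, ∀ y ∈ U, g y = 0 → f xs ≤ f y)
    (hg0 : grad g xs ≠ 0)
    (lam : ℝ) (hlam0 : lam ≠ 0) (hlam : grad f xs = lam • grad g xs)
    (ε : ℝ) (hε : 0 < ε)
    (γ : ℝ → Fin n → ℝ) (hγ : ContDiffOn ℝ 2 γ (Ioo (-ε) ε))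
    (hγ0 : γ 0 = xs)
    (hγg : ∀ t ∈ Ioo (-ε) ε, g (γ t) = 0) :
    -(deriv γ 0 ⬝ᵥ (hess f xs *ᵥ deriv γ 0)) / euclNorm (grad f xs) ≤
      -((lam / |lam|) *
        ((deriv γ 0 ⬝ᵥ (hess g xs *ᵥ deriv γ 0)) / euclNorm (grad g xs))) :=
  stmt_10_general f g hf hg xs hmin lam hlam ε hε γ hγ hγ0 hγg
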